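/- arXiv:2505.18580 — 2 statements merged into one kernel-verified Lean document; each statement's English description precedes it below -/
import Mathlib

section
/- For all unit vectors x, y in ℂ^n (i.e., ‖x‖ = ‖y‖ = 1), one has Tr[(x x* − y y*) · conj(x x* − y y*)] = |∑_i x_i²|² + |∑_i y_i²|² − 2|∑_i x_i y_i|², and this quantity is at most 2. -/
/-!
For rank-one projectors, `Tr[x x* · conj (y y*)] = (x ⬝ᵥ y) · conj (x ⬝ᵥ y) = |∑ x_i y_i|²`, so the
formula follows by expanding the product bilinearly. The bound holds because
`|∑ x_i²| ≤ ∑ |x_i|² = ‖x‖² = 1`, and likewise for `y`.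
-/

open Matrix

section

variable {ι : Type*}

theorem vecMulVec_map_conj (x : ι → ℂ) :
    (vecMulVec x (star x)).map (starRingEnd ℂ) = vecMulVec (star x) x := by
  ext i j
  simp [vecMulVec_apply]

theorem trace_vecMulVec_mul_map_conj [Fintype ι] (x y : ι → ℂ) :
    trace (vecMulVec x (star x) * (vecMulVec y (star y)).map (starRingEnd ℂ)) =
      ((‖∑ i, x i * y i‖ ^ 2 : ℝ) : ℂ) := by
  rw [vecMulVec_map_conj, vecMulVec_mul_vecMulVec, trace_vecMulVec, dotProduct_smul,
    smul_eq_mul, star_dotProduct_star, dotProduct_comm y, Complex.ofReal_pow, ← Complex.conj_mul']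
  rfl

theorem trace_sub_vecMulVec_mul_map_conj [Fintype ι] (x y : ι → ℂ) :
    trace ((vecMulVec x (star x) - vecMulVec y (star y)) *
        (vecMulVec x (star x) - vecMulVec y (star y)).map (starRingEnd ℂ)) =
      ((‖∑ i, x i ^ 2‖ ^ 2 + ‖∑ i, y i ^ 2‖ ^ 2 - 2 * ‖∑ i, x i * y i‖ ^ 2 : ℝ) : ℂ) := by
  rw [Matrix.map_sub _ (map_sub _), sub_mul, mul_sub, mul_sub, trace_sub, trace_sub, trace_sub,
    trace_vecMulVec_mul_map_conj, trace_vecMulVec_mul_map_conj, trace_vecMulVec_mul_map_conj,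
    trace_vecMulVec_mul_map_conj]
  simp only [sq, mul_comm (y _)]
  push_cast
  ring

theorem EuclideanSpace.norm_sum_sq_le [Fintype ι] {𝕜 : Type*} [RCLike 𝕜] (x : EuclideanSpace 𝕜 ι) :
    ‖∑ i, x i ^ 2‖ ≤ ‖x‖ ^ 2 :=
  calc ‖∑ i, x i ^ 2‖ ≤ ∑ i, ‖x i ^ 2‖ := norm_sum_le _ _
    _ = ‖x‖ ^ 2 := by simp only [norm_pow, EuclideanSpace.norm_sq_eq]

end

theorem quantum_transport_cost_formula (n : ℕ) (x y : EuclideanSpace ℂ (Fin n))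
    (hx : ‖x‖ = 1) (hy : ‖y‖ = 1) :
    Matrix.trace ((vecMulVec x (star x) - vecMulVec y (star y)) *
        (vecMulVec x (star x) - vecMulVec y (star y)).map (starRingEnd ℂ)) =
      ((‖∑ i, (x i)^2‖^2 + ‖∑ i, (y i)^2‖^2
        - 2 * ‖∑ i, x i * y i‖^2 : ℝ) : ℂ) ∧
    ‖∑ i, (x i)^2‖^2 + ‖∑ i, (y i)^2‖^2
        - 2 * ‖∑ i, x i * y i‖^2 ≤ 2 := by
  refine ⟨trace_sub_vecMulVec_mul_map_conj x y, ?_⟩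
  have hSx := hx ▸ EuclideanSpace.norm_sum_sq_le x
  have hSy := hy ▸ EuclideanSpace.norm_sum_sq_le y
  nlinarith [norm_nonneg (∑ i, x i ^ 2), norm_nonneg (∑ i, y i ^ 2), sq_nonneg ‖∑ i, x i * y i‖]
end

section
/- Let K be an invertible linear operator on the space of polynomials of degree at most d on a compact set X, satisfying: (P1) K(1) = 1, (P2) Kp ∈ T for every polynomial p of degree ≤ d nonnegative on X, where T is a convex cone of polynomials nonnegative on X containing the nonnegative constants and closed under addition, and (P3) ‖K⁻¹q − q‖_X ≤ ε for a given polynomial q of degree ≤ d with min over X equal to 0. Then q + ε ∈ T. -/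
/-!
Since `|K⁻¹q − q| ≤ ε` and `q ≥ 0` on `X`, the polynomial `K⁻¹q + ε` is nonnegative on `X`, so
(P2) puts `K(K⁻¹q + ε)` in `T`; by (P1) and linearity this is `q + ε`.
-/

open MvPolynomial

theorem LinearMap.map_algebraMap_of_map_one {R A B : Type*} [CommSemiring R] [Semiring A]
    [Semiring B] [Algebra R A] [Algebra R B] (f : A →ₗ[R] B) (hf : f 1 = 1) (c : R) :
    f (algebraMap R A c) = algebraMap R B c := by
  rw [Algebra.algebraMap_eq_smul_one, map_smul, hf, ← Algebra.algebraMap_eq_smul_one]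

theorem MvPolynomial.totalDegree_add_C_le {R σ : Type*} [CommSemiring R] {p : MvPolynomial σ R}
    {d : ℕ} (hp : p.totalDegree ≤ d) (c : R) : (p + C c).totalDegree ≤ d :=
  (totalDegree_add _ _).trans (max_le hp ((totalDegree_C c).trans_le d.zero_le))

theorem kernel_operator_positivity_certificate_general (n d : ℕ) (X : Set (Fin n → ℝ))
    (T : Set (MvPolynomial (Fin n) ℝ))
    -- K, an invertible linear operator on polynomials of degree at most d,
    -- with inverse Kinv
    (K Kinv : MvPolynomial (Fin n) ℝ →ₗ[ℝ] MvPolynomial (Fin n) ℝ)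
    (hKinv : ∀ p, K (Kinv p) = p)
    (hKinvdeg : ∀ p : MvPolynomial (Fin n) ℝ, p.totalDegree ≤ d → (Kinv p).totalDegree ≤ d)
    -- (P1)
    (hP1 : K 1 = 1)
    -- (P2)
    (hP2 : ∀ p : MvPolynomial (Fin n) ℝ, p.totalDegree ≤ d →
      (∀ x ∈ X, 0 ≤ eval x p) → K p ∈ T)
    -- q of degree ≤ d with minimum 0 on X
    (q : MvPolynomial (Fin n) ℝ) (hqdeg : q.totalDegree ≤ d)
    (hqmin : (∀ x ∈ X, 0 ≤ eval x q) ∧ ∃ x ∈ X, eval x q = 0)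
    -- (P3)
    (ε : ℝ) (hP3 : ∀ x ∈ X, |eval x (Kinv q - q)| ≤ ε) :
    q + C ε ∈ T := by
  have hKC : K (C ε) = C ε := by
    simpa only [algebraMap_eq] using K.map_algebraMap_of_map_one hP1 ε
  have hshift : q + C ε = K (Kinv q + C ε) := by rw [map_add, hKinv, hKC]
  rw [hshift]
  refine hP2 _ (totalDegree_add_C_le (hKinvdeg q hqdeg) ε) fun x hx => ?_
  have hclose := (abs_le.mp (hP3 x hx)).1
  rw [map_sub] at hclose
  rw [map_add, eval_C]
  linarith [hqmin.1 x hx]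

theorem kernel_operator_positivity_certificate (n d : ℕ) (X : Set (Fin n → ℝ))
    (hXc : IsCompact X)
    (T : Set (MvPolynomial (Fin n) ℝ))
    -- T is a convex cone of polynomials nonnegative on X containing the
    -- nonnegative constants and closed under addition
    (hTpos : ∀ f ∈ T, ∀ x ∈ X, 0 ≤ eval x f)
    (hTconst : ∀ c : ℝ, 0 ≤ c → C c ∈ T)
    (hTadd : ∀ f g, f ∈ T → g ∈ T → f + g ∈ T)
    -- K, an invertible linear operator on polynomials of degree at most d,
    -- with inverse Kinv
    (K Kinv : MvPolynomial (Fin n) ℝ →ₗ[ℝ] MvPolynomial (Fin n) ℝ)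
    (hKinv : ∀ p, K (Kinv p) = p) (hKinv' : ∀ p, Kinv (K p) = p)
    (hKdeg : ∀ p : MvPolynomial (Fin n) ℝ, p.totalDegree ≤ d → (K p).totalDegree ≤ d)
    (hKinvdeg : ∀ p : MvPolynomial (Fin n) ℝ, p.totalDegree ≤ d → (Kinv p).totalDegree ≤ d)
    -- (P1)
    (hP1 : K 1 = 1)
    -- (P2)
    (hP2 : ∀ p : MvPolynomial (Fin n) ℝ, p.totalDegree ≤ d →
      (∀ x ∈ X, 0 ≤ eval x p) → K p ∈ T)
    -- q of degree ≤ d with minimum 0 on X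
    (q : MvPolynomial (Fin n) ℝ) (hqdeg : q.totalDegree ≤ d)
    (hqmin : (∀ x ∈ X, 0 ≤ eval x q) ∧ ∃ x ∈ X, eval x q = 0)
    -- (P3)
    (ε : ℝ) (hP3 : ∀ x ∈ X, |eval x (Kinv q - q)| ≤ ε) :
    q + C ε ∈ T :=
  kernel_operator_positivity_certificate_general n d X T K Kinv hKinv hKinvdeg hP1 hP2 q hqdeg hqmin
    ε hP3
end
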